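/- arXiv:2502.20566 — 2 statements merged into one kernel-verified Lean document; each statement's English description precedes it below -/
import Mathlib

section
/- Let β₂ ∈ (0,1), ε > 0, R > 0, and a₁, …, a_T ∈ [0, R²] with b_t = Σ_{j=1}^t β₂^{t−j} a_j and b₀ = 0. Then Σ_{t=1}^T a_t/(ε + b_t) ≤ ln(1 + R²/(ε(1 − β₂))) + T · ln(1/β₂). -/
/-!
Each summand is dominated by a logarithmic increment: since `1 - x⁻¹ ≤ log x`,
`a_{t+1} / (ε + b_{t+1}) ≤ log (ε + b_{t+1}) - log (ε + β b_t)`, and `ε + β b_t ≥ β (ε + b_t)`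
costs at most `log (1 / β)` per step. The increments telescope to
`log ((ε + b_T) / ε)`, and `b_T ≤ R² / (1 - β)` bounds what remains.
-/

open Finset Real

def ema (β : ℝ) (a : ℕ → ℝ) (t : ℕ) : ℝ :=
  ∑ j ∈ Icc 1 t, β ^ (t - j) * a j

section Ema

variable {β : ℝ} {a : ℕ → ℝ}

lemma ema_zero : ema β a 0 = 0 := by
  simp [ema]

lemma ema_succ (t : ℕ) : ema β a (t + 1) = β * ema β a t + a (t + 1) := by
  rw [ema, ema, sum_Icc_succ_top (by omega), mul_sum, Nat.sub_self, pow_zero, one_mul]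
  congr 1
  refine sum_congr rfl fun j hj => ?_
  rw [show t + 1 - j = t - j + 1 by grind, pow_succ]
  ring

lemma ema_nonneg (hβ : 0 ≤ β) {t : ℕ} (ha : ∀ j ∈ Icc 1 t, 0 ≤ a j) : 0 ≤ ema β a t :=
  sum_nonneg fun j hj => mul_nonneg (pow_nonneg hβ _) (ha j hj)

lemma ema_le_div_one_sub (hβ0 : 0 ≤ β) (hβ1 : β < 1) {M : ℝ} (hM : 0 ≤ M) :
    ∀ {t : ℕ}, (∀ j ∈ Icc 1 t, a j ≤ M) → ema β a t ≤ M / (1 - β)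
  | 0, _ => by
    rw [ema_zero]
    exact div_nonneg hM (by linarith)
  | t + 1, ha => by
    have hb : ema β a t ≤ M / (1 - β) :=
      ema_le_div_one_sub hβ0 hβ1 hM fun j hj => ha j (by grind)
    have haM : a (t + 1) ≤ M := ha (t + 1) (by simp)
    rw [le_div_iff₀ (by linarith)] at hb ⊢
    rw [ema_succ]
    nlinarith

lemma div_add_le_log_add_sub_log {v x : ℝ} (hv : 0 < v) (hx : 0 ≤ x) :
    x / (v + x) ≤ log (v + x) - log v := by
  have hvx : 0 < v + x := by linarith
  have h := one_sub_inv_le_log_of_pos (div_pos hvx hv)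
  rwa [log_div hvx.ne' hv.ne', inv_div, one_sub_div hvx.ne', add_sub_cancel_left] at h

lemma div_ema_succ_le (hβ0 : 0 < β) (hβ1 : β ≤ 1) {ε : ℝ} (hε : 0 < ε) {t : ℕ}
    (hb : 0 ≤ ema β a t) (ha : 0 ≤ a (t + 1)) :
    a (t + 1) / (ε + ema β a (t + 1)) ≤
      log (ε + ema β a (t + 1)) - log (ε + ema β a t) + log (1 / β) := by
  have hdiscount : log β + log (ε + ema β a t) ≤ log (ε + β * ema β a t) := by
    rw [← log_mul hβ0.ne' (by positivity)]
    exact log_le_log (by positivity) (by nlinarith)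
  rw [one_div, log_inv, ema_succ, ← add_assoc]
  have := div_add_le_log_add_sub_log (by positivity : 0 < ε + β * ema β a t) ha
  linarith

theorem sum_div_ema_le (hβ0 : 0 < β) (hβ1 : β ≤ 1) {ε : ℝ} (hε : 0 < ε) :
    ∀ {T : ℕ}, (∀ t ∈ Icc 1 T, 0 ≤ a t) →
      ∑ t ∈ Icc 1 T, a t / (ε + ema β a t) ≤
        log (ε + ema β a T) - log ε + T * log (1 / β)
  | 0, _ => by simp [ema_zero]
  | T + 1, ha => by
    have ha' : ∀ t ∈ Icc 1 T, 0 ≤ a t := fun t ht => ha t (by grind)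
    have ih := sum_div_ema_le hβ0 hβ1 hε ha'
    have hstep := div_ema_succ_le hβ0 hβ1 hε (ema_nonneg hβ0.le ha') (ha (T + 1) (by simp))
    rw [sum_Icc_succ_top (by omega)]
    push_cast
    linarith

end Ema

open Finset in
theorem stmt_5_general (β ε R : ℝ) (hβ : β ∈ Set.Ioo (0 : ℝ) 1) (hε : 0 < ε)
    (T : ℕ) (a : ℕ → ℝ) (ha : ∀ t ∈ Finset.Icc 1 T, 0 ≤ a t ∧ a t ≤ R ^ 2) :
    ∑ t ∈ Finset.Icc 1 T, a t / (ε + ∑ j ∈ Finset.Icc 1 t, β ^ (t - j) * a j) ≤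
      Real.log (1 + R ^ 2 / (ε * (1 - β))) + T * Real.log (1 / β) := by
  obtain ⟨hβ0, hβ1⟩ := hβ
  have hb0 : 0 ≤ ema β a T := ema_nonneg hβ0.le fun t ht => (ha t ht).1
  have hbR : ema β a T ≤ R ^ 2 / (1 - β) :=
    ema_le_div_one_sub hβ0.le hβ1 (sq_nonneg R) fun t ht => (ha t ht).2
  have hlog : log (ε + ema β a T) - log ε ≤ log (1 + R ^ 2 / (ε * (1 - β))) := by
    rw [← log_div (by positivity) hε.ne', add_div, div_self hε.ne', mul_comm, ← div_div]
    gcongr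
  have hsum := sum_div_ema_le hβ0 hβ1.le hε fun t ht => (ha t ht).1
  exact hsum.trans (by linarith)

open Finset in
/-- Key summation lemma for Adam: with `b_t = ∑_{j=1}^t β₂^{t-j} a_j`
and `0 ≤ a_t ≤ R²`, one has
`∑_{t=1}^T a_t/(ε + b_t) ≤ ln(1 + R²/(ε(1-β₂))) + T ln(1/β₂)`. -/
theorem stmt_5 (β ε R : ℝ) (hβ : β ∈ Set.Ioo (0 : ℝ) 1) (hε : 0 < ε) (hR : 0 < R)
    (T : ℕ) (a : ℕ → ℝ) (ha : ∀ t ∈ Finset.Icc 1 T, 0 ≤ a t ∧ a t ≤ R ^ 2) :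
    ∑ t ∈ Finset.Icc 1 T, a t / (ε + ∑ j ∈ Finset.Icc 1 t, β ^ (t - j) * a j) ≤
      Real.log (1 + R ^ 2 / (ε * (1 - β))) + T * Real.log (1 / β) :=
  stmt_5_general β ε R hβ hε T a ha
end

section
/- Let β₂ ∈ (0,1), ε > 0, R > 0, and a₁, …, a_T ∈ [0, R²] with b_t = Σ_{j=1}^t β₂^{t−j} a_j and b₀ = 0. Then Σ_{t=1}^T √(a_t/(ε + b_t)) ≤ √(T · ln(1 + R²/(ε(1 − β₂)))) + T · √(ln(1/β₂)). -/
open Finset in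
lemma key_sum_aux (β ε : ℝ) (hβ0 : 0 < β) (hβ1 : β ≤ 1) (hε : 0 < ε)
    (a : ℕ → ℝ) : ∀ T : ℕ, (∀ t ∈ Finset.Icc 1 T, 0 ≤ a t) →
    ∑ t ∈ Finset.Icc 1 T, a t / (ε + ∑ j ∈ Finset.Icc 1 t, β ^ (t - j) * a j)
      ≤ Real.log ((ε + ∑ j ∈ Finset.Icc 1 T, β ^ (T - j) * a j) / ε)
        + T * Real.log (1 / β) := by
  intro T
  induction T with
  | zero => intro _; simp [div_self hε.ne']
  | succ T ih =>
    intro ha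
    have ha' : ∀ t ∈ Finset.Icc 1 T, 0 ≤ a t := fun t ht => ha t (by
      simp only [Finset.mem_Icc] at ht ⊢; omega)
    set b : ℕ → ℝ := fun t => ∑ j ∈ Finset.Icc 1 t, β ^ (t - j) * a j with hb
    have hbnn : ∀ t ≤ T + 1, 0 ≤ b t := by
      intro t ht
      apply Finset.sum_nonneg
      intro j hj
      simp only [Finset.mem_Icc] at hj
      exact mul_nonneg (pow_nonneg hβ0.le _) (ha j (by simp only [Finset.mem_Icc]; omega))
    have hrec : b (T + 1) = β * b T + a (T + 1) := by
      show (∑ j ∈ Finset.Icc 1 (T + 1), β ^ (T + 1 - j) * a j)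
        = β * (∑ j ∈ Finset.Icc 1 T, β ^ (T - j) * a j) + a (T + 1)
      rw [Finset.sum_Icc_succ_top (by omega : 1 ≤ T + 1)]
      simp only [Nat.sub_self, pow_zero, one_mul, Finset.mul_sum]
      congr 1
      apply Finset.sum_congr rfl
      intro j hj
      simp only [Finset.mem_Icc] at hj
      rw [← mul_assoc, ← pow_succ']
      congr 2
      omega
    have hpos : ∀ t ≤ T + 1, 0 < ε + b t := fun t ht => by linarith [hbnn t ht]
    have hposT : 0 < ε + b T := hpos T (by omega)
    have hposT1 : 0 < ε + b (T + 1) := hpos (T + 1) le_rfl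
    rw [Finset.sum_Icc_succ_top (by omega : 1 ≤ T + 1)]
    have key : a (T + 1) / (ε + b (T + 1)) ≤
        Real.log ((ε + b (T + 1)) / ε) - Real.log ((ε + b T) / ε) + Real.log (1 / β) := by
      have hx : (0:ℝ) < β * (ε + b T) / (ε + b (T + 1)) := by positivity
      have hlog := Real.log_le_sub_one_of_pos hx
      have h1 : (1:ℝ) - β * (ε + b T) / (ε + b (T + 1)) ≤
          - Real.log (β * (ε + b T) / (ε + b (T + 1))) := by linarith
      have haT1 : 0 ≤ a (T + 1) := ha (T + 1) (by simp)
      have h2 : a (T + 1) / (ε + b (T + 1)) ≤ 1 - β * (ε + b T) / (ε + b (T + 1)) := by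
        rw [div_le_iff₀ hposT1] at *
        have : (1 - β * (ε + b T) / (ε + b (T + 1))) * (ε + b (T + 1))
            = (ε + b (T + 1)) - β * (ε + b T) := by
          field_simp
        rw [this, hrec]
        nlinarith
      have h3 : - Real.log (β * (ε + b T) / (ε + b (T + 1)))
          = Real.log ((ε + b (T + 1)) / ε) - Real.log ((ε + b T) / ε) + Real.log (1 / β) := by
        rw [Real.log_div (by positivity) (by positivity),
          Real.log_div (by positivity) hε.ne', Real.log_div (by positivity) hε.ne',
          Real.log_mul (by positivity) (by positivity), Real.log_div one_ne_zero (by positivity),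
          Real.log_one]
        ring
      linarith
    have := ih ha'
    push_cast
    linarith
  
lemma sqrt_add_le' (u v : ℝ) (hu : 0 ≤ u) (hv : 0 ≤ v) :
    Real.sqrt (u + v) ≤ Real.sqrt u + Real.sqrt v := by
  have h1 := Real.sq_sqrt hu
  have h2 := Real.sq_sqrt hv
  have h3 := Real.sqrt_nonneg u
  have h4 := Real.sqrt_nonneg v
  have : u + v ≤ (Real.sqrt u + Real.sqrt v) ^ 2 := by nlinarith
  calc Real.sqrt (u + v) ≤ Real.sqrt ((Real.sqrt u + Real.sqrt v) ^ 2) :=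
        Real.sqrt_le_sqrt this
    _ = Real.sqrt u + Real.sqrt v := Real.sqrt_sq (by positivity)

open Finset in
/-- Square-root version of the key summation lemma:
`∑_{t=1}^T √(a_t/(ε + b_t)) ≤ √(T ln(1 + R²/(ε(1-β₂)))) + T √(ln(1/β₂))`. -/
theorem stmt_6 (β ε R : ℝ) (hβ : β ∈ Set.Ioo (0 : ℝ) 1) (hε : 0 < ε) (hR : 0 < R)
    (T : ℕ) (a : ℕ → ℝ) (ha : ∀ t ∈ Finset.Icc 1 T, 0 ≤ a t ∧ a t ≤ R ^ 2) :
    ∑ t ∈ Finset.Icc 1 T,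
        Real.sqrt (a t / (ε + ∑ j ∈ Finset.Icc 1 t, β ^ (t - j) * a j)) ≤
      Real.sqrt (T * Real.log (1 + R ^ 2 / (ε * (1 - β)))) +
        T * Real.sqrt (Real.log (1 / β)) := by
  obtain ⟨hβ0, hβ1⟩ := hβ
  set b : ℕ → ℝ := fun t => ∑ j ∈ Finset.Icc 1 t, β ^ (t - j) * a j with hb
  set c : ℕ → ℝ := fun t => a t / (ε + b t) with hc
  have hbnn : ∀ t ≤ T, 0 ≤ b t := by
    intro t ht
    apply Finset.sum_nonneg
    intro j hj
    simp only [Finset.mem_Icc] at hj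
    exact mul_nonneg (pow_nonneg hβ0.le _)
      (ha j (by simp only [Finset.mem_Icc]; omega)).1
  have hcnn : ∀ t ∈ Finset.Icc 1 T, 0 ≤ c t := by
    intro t ht
    simp only [Finset.mem_Icc] at ht
    exact div_nonneg (ha t (by simp only [Finset.mem_Icc]; omega)).1
      (by linarith [hbnn t ht.2])
  -- bound on b T
  have hbT : b T ≤ R ^ 2 / (1 - β) := by
    have h1 : b T ≤ ∑ j ∈ Finset.Icc 1 T, β ^ (T - j) * R ^ 2 := by
      apply Finset.sum_le_sum
      intro j hj
      exact mul_le_mul_of_nonneg_left (ha j hj).2 (pow_nonneg hβ0.le _)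
    have h2 : ∑ j ∈ Finset.Icc 1 T, β ^ (T - j) * R ^ 2
        ≤ (1 / (1 - β)) * R ^ 2 := by
      rw [← Finset.sum_mul]
      apply mul_le_mul_of_nonneg_right _ (by positivity)
      have h3 : ∑ j ∈ Finset.Icc 1 T, β ^ (T - j) = ∑ k ∈ Finset.range T, β ^ k := by
        rw [show Finset.Icc 1 T = Finset.Ico 1 (T + 1) by rfl,
          Finset.sum_Ico_eq_sum_range]
        simp only [Nat.add_sub_cancel]
        rw [← Finset.sum_range_reflect (fun k => β ^ k) T]
        apply Finset.sum_congr rfl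
        intro i hi
        simp only [Finset.mem_range] at hi
        congr 1
        omega
      have h4 : ∑ k ∈ Finset.range T, β ^ k ≤ 1 / (1 - β) := by
        rw [geom_sum_eq (ne_of_lt hβ1) T,
          show (β ^ T - 1) / (β - 1) = (1 - β ^ T) / (1 - β) by
            rw [div_eq_div_iff (by linarith) (by linarith)]; ring]
        rw [div_le_div_iff₀ (by linarith) (by linarith)]
        have : 0 ≤ β ^ T := pow_nonneg hβ0.le T
        nlinarith
      linarith [h3.le, h4]
    calc b T ≤ (1 / (1 - β)) * R ^ 2 := le_trans h1 h2
      _ = R ^ 2 / (1 - β) := by ring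
  -- key summation bound
  have hkey := key_sum_aux β ε hβ0 hβ1.le hε a T (fun t ht => (ha t ht).1)
  have h1β : (0:ℝ) < 1 - β := by linarith
  have hlogle : Real.log ((ε + b T) / ε) ≤ Real.log (1 + R ^ 2 / (ε * (1 - β))) := by
    apply Real.log_le_log (div_pos (by linarith [hbnn T le_rfl]) hε)
    rw [div_le_iff₀ hε]
    have heq : (1 + R ^ 2 / (ε * (1 - β))) * ε = ε + R ^ 2 / (1 - β) := by
      field_simp
    rw [heq]
    linarith
  have hsumc : ∑ t ∈ Finset.Icc 1 T, c t ≤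
      Real.log (1 + R ^ 2 / (ε * (1 - β))) + T * Real.log (1 / β) :=
    le_trans hkey (by linarith)
  -- Cauchy-Schwarz
  have hCS : (∑ t ∈ Finset.Icc 1 T, Real.sqrt (c t)) ^ 2
      ≤ T * ∑ t ∈ Finset.Icc 1 T, c t := by
    have := sq_sum_le_card_mul_sum_sq (s := Finset.Icc 1 T) (f := fun t => Real.sqrt (c t))
    have hcard : (Finset.Icc 1 T).card = T := by
      rw [Nat.card_Icc]; omega
    rw [hcard] at this
    calc (∑ t ∈ Finset.Icc 1 T, Real.sqrt (c t)) ^ 2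
        ≤ (T : ℝ) * ∑ t ∈ Finset.Icc 1 T, Real.sqrt (c t) ^ 2 := by exact_mod_cast this
      _ = T * ∑ t ∈ Finset.Icc 1 T, c t := by
          congr 1
          apply Finset.sum_congr rfl
          intro t ht
          exact Real.sq_sqrt (hcnn t ht)
  have hL1 : 0 ≤ Real.log (1 + R ^ 2 / (ε * (1 - β))) := by
    apply Real.log_nonneg
    have : 0 ≤ R ^ 2 / (ε * (1 - β)) := div_nonneg (by positivity) (by positivity)
    linarith
  have hL2 : 0 ≤ Real.log (1 / β) := by
    apply Real.log_nonneg
    rw [le_div_iff₀ hβ0]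
    linarith
  have hsnn : 0 ≤ ∑ t ∈ Finset.Icc 1 T, Real.sqrt (c t) :=
    Finset.sum_nonneg fun t _ => Real.sqrt_nonneg _
  have step1 : ∑ t ∈ Finset.Icc 1 T, Real.sqrt (c t)
      ≤ Real.sqrt (T * ∑ t ∈ Finset.Icc 1 T, c t) := by
    rw [show ∑ t ∈ Finset.Icc 1 T, Real.sqrt (c t)
        = Real.sqrt ((∑ t ∈ Finset.Icc 1 T, Real.sqrt (c t)) ^ 2) from
        (Real.sqrt_sq hsnn).symm]
    exact Real.sqrt_le_sqrt hCS
  have step2 : Real.sqrt (T * ∑ t ∈ Finset.Icc 1 T, c t)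
      ≤ Real.sqrt (T * Real.log (1 + R ^ 2 / (ε * (1 - β))) + T ^ 2 * Real.log (1 / β)) := by
    apply Real.sqrt_le_sqrt
    have hTnn : (0:ℝ) ≤ T := Nat.cast_nonneg T
    nlinarith [hsumc]
  have step3 : Real.sqrt (T * Real.log (1 + R ^ 2 / (ε * (1 - β))) + T ^ 2 * Real.log (1 / β))
      ≤ Real.sqrt (T * Real.log (1 + R ^ 2 / (ε * (1 - β))))
        + T * Real.sqrt (Real.log (1 / β)) := by
    have hTnn : (0:ℝ) ≤ T := Nat.cast_nonneg T
    have h := sqrt_add_le' (T * Real.log (1 + R ^ 2 / (ε * (1 - β))))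
      (T ^ 2 * Real.log (1 / β)) (by positivity) (by positivity)
    have heq : Real.sqrt (T ^ 2 * Real.log (1 / β)) = T * Real.sqrt (Real.log (1 / β)) := by
      rw [Real.sqrt_mul (by positivity), Real.sqrt_sq hTnn]
    linarith [h, heq.le, heq.ge]
  calc ∑ t ∈ Finset.Icc 1 T, Real.sqrt (c t)
      ≤ Real.sqrt (T * ∑ t ∈ Finset.Icc 1 T, c t) := step1
    _ ≤ _ := le_trans step2 step3
end
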